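/- Let F/F₀ be an unramified quadratic extension of p-adic fields with uniformizer ϖ, and let 𝕍 be a nondegenerate 3-dimensional F/F₀-Hermitian space. Let u ∈ 𝕍 be a nonzero isotropic vector and let Λ be a vertex lattice of type 1 (Λ ⊆ Λ^∨ ⊆ ϖ^{-1}Λ with dim(Λ^∨/Λ) = 1) with u ∈ Λ and u ∉ ϖΛ. Then there exists a vertex lattice Λ' of type 3 with u ∈ Λ' ⊆ Λ. -/

import Mathlib

/-!
Take `Λ' = O u + ϖ Λ^∨`. It lies in `Λ` because `ϖ Λ^∨ ⊆ Λ`, and since `u` is isotropic the form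
is `ϖ`-divisible on `Λ'`, so `ϖ⁻¹ Λ' ⊆ Λ'^∨`.

Every `a ∈ Λ^∨ \ Λ` has `φ(a, a) ∉ O`: otherwise `Λ^∨ = Λ + O a` would be integral, hence contained
in its own dual `(Λ^∨)^∨`, which is `Λ` by nondegeneracy (take a dual basis). Applied to `ϖ⁻¹ u`
this shows `u ∉ ϖ Λ^∨`, so `φ(·, u)` induces a nonzero functional on the three-dimensional space
`Λ / ϖ Λ`. Its kernel contains the images of `u` and of `ϖ a` for some `a ∈ Λ^∨ \ Λ`, which are
independent, so it is exactly the image of `Λ'`. Now if `x ∈ Λ'^∨`, then `s = ϖ x` lies in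
`(Λ^∨)^∨ = Λ` and `φ(s, u) ∈ ϖ O`, hence `s ∈ Λ'`.
-/

open Module
open scoped Pointwise

theorem LinearMap.ker_eq_span_pair_of_finrank_eq_three {K W : Type*} [Field K] [AddCommGroup W]
    [Module K W] (hW : finrank K W = 3) {ℓ : W →ₗ[K] K} (hℓ : ℓ ≠ 0) {x y : W}
    (hx : ℓ x = 0) (hy : ℓ y = 0) (hx0 : x ≠ 0) (hxy : ∀ a : K, a • x ≠ y) :
    LinearMap.ker ℓ = Submodule.span K {x, y} := by
  have : FiniteDimensional K W := .of_finrank_pos (by omega)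
  have hind : LinearIndependent K ![x, y] := (LinearIndependent.pair_iff' hx0).mpr hxy
  symm
  refine Submodule.eq_of_le_of_finrank_le ?_ ?_
  · rw [Submodule.span_le, Set.insert_subset_iff, Set.singleton_subset_iff]
    exact ⟨hx, hy⟩
  · have hker := Module.Dual.finrank_ker_add_one_of_ne_zero hℓ
    have hspan := finrank_span_eq_card hind
    rw [Matrix.range_cons_cons_empty] at hspan
    simp only [Fintype.card_fin] at hspan
    omega

namespace Module.Basis

variable {R M κ : Type*} [CommRing R] [AddCommGroup M] [Module R M] [Fintype κ] (b : Basis κ R M)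

noncomputable def reduceMod (I : Ideal R) : M →ₗ[R] κ → R ⧸ I :=
  LinearMap.compLeft (Ideal.Quotient.mkₐ R I).toLinearMap κ ∘ₗ b.equivFun.toLinearMap

theorem reduceMod_apply (I : Ideal R) (x : M) (k : κ) :
    b.reduceMod I x k = Ideal.Quotient.mk I (b.repr x k) := rfl

theorem reduceMod_eq_zero_iff (a : R) (x : M) :
    b.reduceMod (Ideal.span {a}) x = 0 ↔ ∃ w, a • w = x := by
  constructor
  · intro h
    have hdvd : ∀ k, a ∣ b.repr x k := fun k => by
      rw [← Ideal.mem_span_singleton, ← Ideal.Quotient.eq_zero_iff_mem, ← b.reduceMod_apply, h]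
      rfl
    choose c hc using hdvd
    refine ⟨∑ k, c k • b k, ?_⟩
    conv_rhs => rw [← b.sum_repr x]
    simp only [Finset.smul_sum, smul_smul, hc]
  · rintro ⟨w, rfl⟩
    ext k
    simp [reduceMod_apply]

theorem exists_comp_reduceMod (I : Ideal R) (g : M →ₗ[R] R) :
    ∃ gbar : (κ → R ⧸ I) →ₗ[R ⧸ I] R ⧸ I,
      ∀ x, gbar (b.reduceMod I x) = Ideal.Quotient.mk I (g x) := by
  refine ⟨∑ k, Ideal.Quotient.mk I (g (b k)) • LinearMap.proj k, fun x => ?_⟩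
  have hgx : g x = ∑ k, b.repr x k * g (b k) := by
    conv_lhs => rw [← b.sum_repr x]
    simp only [map_sum, map_smul, smul_eq_mul]
  simp [hgx, reduceMod_apply, mul_comm]

end Module.Basis

theorem exists_eq_add_smul_of_dvd {O M : Type*} [CommRing O] {ϖ : O} [(Ideal.span {ϖ}).IsMaximal]
    [AddCommGroup M] [Module O M] [Module.Free O M] [Module.Finite O M]
    (hM : finrank O M = 3) (g : M →ₗ[O] O) (hg : ∃ y, ¬ ϖ ∣ g y) {p q : M}
    (hp : ∀ w, ϖ • w ≠ p) (hq : ∀ (β : O) w, β • p + ϖ • w ≠ q) (hgp : ϖ ∣ g p)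
    (hgq : ϖ ∣ g q) {s : M} (hgs : ϖ ∣ g s) :
    ∃ (α β : O) (w : M), α • p + β • q + ϖ • w = s := by
  let := Ideal.Quotient.field (Ideal.span {ϖ})
  have : Nontrivial O := (Ideal.Quotient.mk_surjective (I := Ideal.span {ϖ})).nontrivial
  let b := Module.Free.chooseBasis O M
  let J := b.reduceMod (Ideal.span {ϖ})
  obtain ⟨gbar, hgbar⟩ := b.exists_comp_reduceMod (Ideal.span {ϖ}) g
  have hker : ∀ y, gbar (J y) = 0 ↔ ϖ ∣ g y := fun y => by
    rw [hgbar, Ideal.Quotient.eq_zero_iff_mem, Ideal.mem_span_singleton]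
  have hsmul : ∀ (c : O) y, Ideal.Quotient.mk (Ideal.span {ϖ}) c • J y = J (c • y) := fun c y =>
    (algebraMap_smul _ c (J y)).trans (map_smul J c y).symm
  have hJ : ∀ y, J y = 0 ↔ ∃ w, ϖ • w = y := b.reduceMod_eq_zero_iff ϖ
  have hdim :
      finrank (O ⧸ Ideal.span {ϖ}) (Free.ChooseBasisIndex O M → O ⧸ Ideal.span {ϖ}) = 3 := by
    rw [Module.finrank_fintype_fun_eq_card, ← Module.finrank_eq_card_chooseBasisIndex, hM]
  have hgbar0 : gbar ≠ 0 := by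
    obtain ⟨y, hy⟩ := hg
    intro h
    exact hy ((hker y).mp (by rw [h]; rfl))
  have hJp : J p ≠ 0 := fun h => by
    obtain ⟨w, hw⟩ := (hJ p).mp h
    exact hp w hw
  have hJpq : ∀ a : O ⧸ Ideal.span {ϖ}, a • J p ≠ J q := by
    intro a h
    obtain ⟨β, rfl⟩ := Ideal.Quotient.mk_surjective a
    rw [hsmul, eq_comm, ← sub_eq_zero, ← map_sub, hJ] at h
    obtain ⟨w, hw⟩ := h
    exact hq β w (by rw [hw]; abel)
  have hspan := LinearMap.ker_eq_span_pair_of_finrank_eq_three hdim hgbar0 ((hker p).mpr hgp)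
    ((hker q).mpr hgq) hJp hJpq
  have hJs : J s ∈ Submodule.span _ {J p, J q} := hspan ▸ LinearMap.mem_ker.mpr ((hker s).mpr hgs)
  obtain ⟨a, c, hac⟩ := Submodule.mem_span_pair.mp hJs
  obtain ⟨α, rfl⟩ := Ideal.Quotient.mk_surjective a
  obtain ⟨β, rfl⟩ := Ideal.Quotient.mk_surjective c
  rw [hsmul, hsmul, ← map_add, eq_comm, ← sub_eq_zero, ← map_sub, hJ] at hac
  obtain ⟨w, hw⟩ := hac
  exact ⟨α, β, w, by rw [hw]; abel⟩

theorem exists_algebraMap_comp_eq {R K M : Type*} [CommRing R] [CommRing K] [Algebra R K]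
    [AddCommGroup M] [Module R M] [Module.Free R M] (f : M →ₗ[R] K)
    (hf : ∀ x, f x ∈ (algebraMap R K).range) :
    ∃ g : M →ₗ[R] R, ∀ x, algebraMap R K (g x) = f x := by
  let b := Module.Free.chooseBasis R M
  choose g₀ hg₀ using fun i => hf (b i)
  have : Algebra.linearMap R K ∘ₗ b.constr R g₀ = f := b.ext fun i => by simp [hg₀]
  exact ⟨b.constr R g₀, LinearMap.congr_fun this⟩

theorem Submodule.mem_span_singleton_sup_smul_iff {R M : Type*} [CommRing R] [AddCommGroup M]
    [Module R M] {u x : M} {a : R} {N : Submodule R M} :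
    x ∈ span R {u} ⊔ a • N ↔ ∃ c : R, ∃ d ∈ N, c • u + a • d = x := by
  simp [Submodule.mem_sup, Submodule.mem_span_singleton, Submodule.mem_smul_pointwise_iff_exists]

section Lattice

variable {R K V : Type*} [CommRing R] [Field K] [Algebra R K] [AddCommGroup V] [Module K V]
  [Module R V] [IsScalarTower R K V]

theorem Submodule.span_eq_top_of_forall_smul_mem {c : R} (hc : algebraMap R K c ≠ 0)
    {L L' : Submodule R V} (hL : span K (L : Set V) = ⊤) (h : ∀ y ∈ L, c • y ∈ L') :
    span K (L' : Set V) = ⊤ := by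
  refine eq_top_iff.mpr (hL ▸ span_le.mpr fun y hy => ?_)
  rw [SetLike.mem_coe, ← inv_smul_smul₀ hc y, algebraMap_smul]
  exact smul_mem _ _ (subset_span (h y hy))

variable [IsFractionRing R K]

variable (K) in
theorem Submodule.IsLattice.finrank_eq [IsDomain R] [IsPrincipalIdealRing R] [FiniteDimensional K V]
    (L : Submodule R V) [L.IsLattice K] : finrank R L = finrank K V :=
  finrank_eq_of_rank_eq ((IsLattice.rank' K L).trans (finrank_eq_rank K V).symm)

variable {L : Submodule R V} [L.IsLattice K] {κ : Type*}

theorem Module.Basis.repr_extendOfIsLattice (b : Basis κ R L) (y : L) (k : κ) :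
    (b.extendOfIsLattice K).repr y k = algebraMap R K (b.repr y k) := by
  have : ((b.extendOfIsLattice K).coord k).restrictScalars R ∘ₗ L.subtype =
      Algebra.linearMap R K ∘ₗ b.coord k :=
    b.ext fun i => by
      simp only [LinearMap.comp_apply, Submodule.subtype_apply, LinearMap.restrictScalars_apply,
        Basis.coord_apply, ← b.extendOfIsLattice_apply K, Basis.repr_self,
        Algebra.linearMap_apply]
      by_cases h : i = k <;> simp [h]
  exact LinearMap.congr_fun this y

theorem Module.Basis.mem_iff_repr_extendOfIsLattice_mem [Fintype κ] (b : Basis κ R L) (x : V) :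
    x ∈ L ↔ ∀ k, (b.extendOfIsLattice K).repr x k ∈ (algebraMap R K).range := by
  refine ⟨fun hx k => ⟨_, (b.repr_extendOfIsLattice ⟨x, hx⟩ k).symm⟩, fun hx => ?_⟩
  choose c hc using hx
  rw [← (b.extendOfIsLattice K).sum_repr x]
  refine L.sum_mem fun k _ => ?_
  rw [← hc, algebraMap_smul, Basis.extendOfIsLattice_apply]
  exact L.smul_mem _ (b k).2

end Lattice

section Hermitian

variable {O F V : Type*} [CommRing O] [Field F] [Algebra O F] [AddCommGroup V] [Module F V]
  {σ : F ≃+* F} {φ : V →ₗ[F] V →ₛₗ[(σ : F →+* F)] F}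

theorem apply_mem_range_swap (hσO : ∀ a : O, σ (algebraMap O F a) ∈ (algebraMap O F).range)
    (hherm : ∀ x y : V, φ x y = σ (φ y x)) {x y : V} (h : φ x y ∈ (algebraMap O F).range) :
    φ y x ∈ (algebraMap O F).range := by
  obtain ⟨r, hr⟩ := h
  rw [hherm, ← hr]
  exact hσO r

theorem exists_forall_apply_eq_repr [FiniteDimensional F V] (hherm : ∀ x y : V, φ x y = σ (φ y x))
    (hnd : ∀ x : V, (∀ y : V, φ x y = 0) → x = 0) {κ : Type*} [Fintype κ] (B : Basis κ F V)
    (k : κ) : ∃ f, ∀ x, φ x f = B.repr x k := by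
  classical
  -- `f ↦ φ (B j) f` is only `σ`-semilinear; composing with `σ⁻¹` makes it linear.
  let Ψ : V →ₗ[F] κ → F :=
    { toFun := fun f j => σ.symm (φ (B j) f)
      map_add' := fun f f' => by ext j; simp
      map_smul' := fun c f => by ext j; simp }
  have hinj : Function.Injective Ψ := by
    refine (injective_iff_map_eq_zero Ψ).mpr fun f hf => hnd f fun y => ?_
    have h : φ.flip f = 0 := B.ext fun j => by simpa [Ψ] using congr_fun hf j
    rw [hherm, ← LinearMap.flip_apply, h, LinearMap.zero_apply, map_zero]
  have hdim : finrank F V = finrank F (κ → F) := by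
    rw [Module.finrank_fintype_fun_eq_card, Module.finrank_eq_card_basis B]
  obtain ⟨f, hf⟩ := (LinearMap.injective_iff_surjective_of_finrank_eq_finrank hdim).mp hinj
    (Pi.single k 1)
  have : φ.flip f = B.coord k := B.ext fun j => by
    have hj := congr_fun hf j
    simp only [Ψ, LinearMap.coe_mk, AddHom.coe_mk, RingEquiv.symm_apply_eq] at hj
    rcases eq_or_ne j k with rfl | h
    · simp [hj]
    · simp [hj, h, h.symm]
  exact ⟨f, LinearMap.congr_fun this⟩

variable [Module O V] [IsScalarTower O F V]

variable (φ) in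
theorem apply_smul_left (c : O) (x y : V) : φ (c • x) y = algebraMap O F c * φ x y := by
  rw [← algebraMap_smul F c x, map_smul, LinearMap.smul_apply, smul_eq_mul]

variable (φ) in
theorem apply_smul_right (c : O) (x y : V) : φ x (c • y) = σ (algebraMap O F c) * φ x y := by
  rw [← algebraMap_smul F c y, LinearMap.map_smulₛₗ, smul_eq_mul]
  rfl

variable (φ) in
def latticeDual (L : Submodule O V) : Submodule O V where
  carrier := {x | ∀ y ∈ L, φ x y ∈ (algebraMap O F).range}
  add_mem' hx hx' y hy := by
    rw [map_add, LinearMap.add_apply]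
    exact add_mem (hx y hy) (hx' y hy)
  zero_mem' y _ := by simp
  smul_mem' c x hx y hy := by
    rw [apply_smul_left]
    exact mul_mem ⟨c, rfl⟩ (hx y hy)

theorem latticeDual_anti {L L' : Submodule O V} (h : L ≤ L') :
    latticeDual φ L' ≤ latticeDual φ L :=
  fun _ hx y hy => hx y (h hy)

theorem latticeDual_sup (L L' : Submodule O V) :
    latticeDual φ (L ⊔ L') = latticeDual φ L ⊓ latticeDual φ L' := by
  refine le_antisymm (le_inf (latticeDual_anti le_sup_left) (latticeDual_anti le_sup_right)) ?_
  rintro x ⟨hx, hx'⟩ _ hsup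
  obtain ⟨y, hy, y', hy', rfl⟩ := Submodule.mem_sup.mp hsup
  rw [map_add]
  exact add_mem (hx y hy) (hx' y' hy')

theorem mem_latticeDual_span_singleton
    (hσO : ∀ a : O, σ (algebraMap O F a) ∈ (algebraMap O F).range) {a x : V} :
    x ∈ latticeDual φ (Submodule.span O {a}) ↔ φ x a ∈ (algebraMap O F).range := by
  refine ⟨fun hx => hx a (Submodule.mem_span_singleton_self a), fun hx y hy => ?_⟩
  obtain ⟨c, rfl⟩ := Submodule.mem_span_singleton.mp hy
  rw [apply_smul_right]
  exact mul_mem (hσO c) hx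

theorem sup_span_singleton_le_latticeDual
    (hσO : ∀ a : O, σ (algebraMap O F a) ∈ (algebraMap O F).range)
    (hherm : ∀ x y : V, φ x y = σ (φ y x)) {L : Submodule O V} (hL : L ≤ latticeDual φ L)
    {a : V} (ha : a ∈ latticeDual φ L) (haa : φ a a ∈ (algebraMap O F).range) :
    L ⊔ Submodule.span O {a} ≤ latticeDual φ (L ⊔ Submodule.span O {a}) := by
  rw [latticeDual_sup]
  refine sup_le (le_inf hL fun y hy => ?_) ?_
  · exact (mem_latticeDual_span_singleton hσO).mpr (apply_mem_range_swap hσO hherm (ha y hy))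
  · rw [Submodule.span_le, Set.singleton_subset_iff]
    exact ⟨ha, (mem_latticeDual_span_singleton hσO).mpr haa⟩

theorem latticeDual_latticeDual_le [IsDomain O] [IsPrincipalIdealRing O] [IsFractionRing O F]
    [FiniteDimensional F V] (hσO : ∀ a : O, σ (algebraMap O F a) ∈ (algebraMap O F).range)
    (hherm : ∀ x y : V, φ x y = σ (φ y x)) (hnd : ∀ x : V, (∀ y : V, φ x y = 0) → x = 0)
    (L : Submodule O V) [L.IsLattice F] : latticeDual φ (latticeDual φ L) ≤ L := by
  let b := Module.Free.chooseBasis O L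
  intro z hz
  refine (b.mem_iff_repr_extendOfIsLattice_mem z).mpr fun k => ?_
  obtain ⟨f, hf⟩ := exists_forall_apply_eq_repr hherm hnd (b.extendOfIsLattice F) k
  rw [← hf]
  refine hz f fun y hy => apply_mem_range_swap hσO hherm ?_
  rw [hf]
  exact (b.mem_iff_repr_extendOfIsLattice_mem y).mp hy k

theorem mem_of_latticeDual_le_sup_span_singleton [IsDomain O] [IsPrincipalIdealRing O]
    [IsFractionRing O F] [FiniteDimensional F V]
    (hσO : ∀ a : O, σ (algebraMap O F a) ∈ (algebraMap O F).range)
    (hherm : ∀ x y : V, φ x y = σ (φ y x)) (hnd : ∀ x : V, (∀ y : V, φ x y = 0) → x = 0)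
    (L : Submodule O V) [L.IsLattice F] (hL : L ≤ latticeDual φ L) {a : V}
    (ha : a ∈ latticeDual φ L) (haa : φ a a ∈ (algebraMap O F).range)
    (hdual : latticeDual φ L ≤ L ⊔ Submodule.span O {a}) : a ∈ L :=
  latticeDual_latticeDual_le hσO hherm hnd L <| latticeDual_anti hdual <|
    sup_span_singleton_le_latticeDual hσO hherm hL ha haa <|
      Submodule.mem_sup_right (Submodule.mem_span_singleton_self a)

theorem smul_mem_latticeDual {c : O} (hc : σ (algebraMap O F c) = algebraMap O F c)
    {N : Submodule O V} {x : V} (hx : x ∈ latticeDual φ (c • N)) :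
    c • x ∈ latticeDual φ N := fun y hy => by
  rw [apply_smul_left, ← hc, ← apply_smul_right]
  exact hx _ (Submodule.smul_mem_pointwise_smul y c N hy)

theorem mem_smul_latticeDual {ϖ : O} (hϖ : algebraMap O F ϖ ≠ 0)
    (hσO : ∀ a : O, σ (algebraMap O F a) ∈ (algebraMap O F).range)
    (hherm : ∀ x y : V, φ x y = σ (φ y x)) (hσϖ : σ (algebraMap O F ϖ) = algebraMap O F ϖ)
    {L : Submodule O V} {u : V} (h : ∀ y ∈ L, ∃ r, φ y u = algebraMap O F (ϖ * r)) :
    u ∈ ϖ • latticeDual φ L := by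
  refine (Submodule.mem_smul_pointwise_iff_exists _ _ _).mpr
    ⟨(algebraMap O F ϖ)⁻¹ • u, fun y hy => ?_, ?_⟩
  · obtain ⟨r, hr⟩ := h y hy
    rw [map_smul, LinearMap.smul_apply, smul_eq_mul, hherm, hr, map_mul, map_mul, hσϖ,
      inv_mul_cancel_left₀ hϖ]
    exact hσO r
  · rw [← algebraMap_smul F ϖ, smul_smul, mul_inv_cancel₀ hϖ, one_smul]

theorem mem_latticeDual_of_smul_mem {ϖ : O} (hϖ : algebraMap O F ϖ ≠ 0)
    (hσO : ∀ a : O, σ (algebraMap O F a) ∈ (algebraMap O F).range)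
    (hherm : ∀ x y : V, φ x y = σ (φ y x)) (hσϖ : σ (algebraMap O F ϖ) = algebraMap O F ϖ)
    {Λ : Submodule O V} {u : V} (huiso : φ u u = 0)
    (hle : Submodule.span O {u} ⊔ ϖ • latticeDual φ Λ ≤ Λ) {x : V}
    (hx : ϖ • x ∈ Submodule.span O {u} ⊔ ϖ • latticeDual φ Λ) :
    x ∈ latticeDual φ (Submodule.span O {u} ⊔ ϖ • latticeDual φ Λ) := by
  intro w hw
  obtain ⟨c, d, hd, hx⟩ := Submodule.mem_span_singleton_sup_smul_iff.mp hx
  have hwΛ := hle hw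
  obtain ⟨c', d', hd', rfl⟩ := Submodule.mem_span_singleton_sup_smul_iff.mp hw
  have huΛ : u ∈ Λ := hle (Submodule.mem_sup_left (Submodule.mem_span_singleton_self u))
  have key : φ x (c' • u + ϖ • d') = algebraMap O F c * φ u d' + φ d (c' • u + ϖ • d') := by
    apply mul_left_cancel₀ hϖ
    rw [← apply_smul_left, ← hx]
    simp only [map_add, LinearMap.add_apply, apply_smul_left, apply_smul_right, huiso, hσϖ]
    ring
  rw [key]
  exact add_mem (mul_mem ⟨c, rfl⟩ (apply_mem_range_swap hσO hherm (hd' u huΛ))) (hd _ hwΛ)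

end Hermitian

section TypeOne

variable {O F V : Type*} [CommRing O] [IsDomain O] [IsDiscreteValuationRing O] [Field F]
  [Algebra O F] [IsFractionRing O F] [AddCommGroup V] [Module F V] [FiniteDimensional F V]
  [Module O V] [IsScalarTower O F V] {σ : F ≃+* F} {φ : V →ₗ[F] V →ₛₗ[(σ : F →+* F)] F}

theorem notMem_smul_latticeDual {ϖ : O} (hϖ : ϖ ≠ 0)
    (hσO : ∀ a : O, σ (algebraMap O F a) ∈ (algebraMap O F).range)
    (hσϖ : σ (algebraMap O F ϖ) = algebraMap O F ϖ)
    (hherm : ∀ x y : V, φ x y = σ (φ y x)) (hnd : ∀ x : V, (∀ y : V, φ x y = 0) → x = 0)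
    (Λ : Submodule O V) [Λ.IsLattice F] (hint : Λ ≤ latticeDual φ Λ)
    (htype : ∀ a ∈ latticeDual φ Λ, a ∉ Λ → ∀ x ∈ latticeDual φ Λ, ∃ c : O, x - c • a ∈ Λ)
    {u : V} (huiso : φ u u = 0) (hu : ∀ w : V, ϖ • w = u → w ∉ Λ) :
    u ∉ ϖ • latticeDual φ Λ := by
  rw [Submodule.mem_smul_pointwise_iff_exists]
  rintro ⟨d, hd, rfl⟩
  have hdd : φ d d = 0 := by
    have hϖ' : algebraMap O F ϖ ≠ 0 := (map_ne_zero_iff _ (IsFractionRing.injective O F)).mpr hϖ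
    rw [apply_smul_left, apply_smul_right, hσϖ] at huiso
    simpa [hϖ'] using huiso
  refine hu d rfl (mem_of_latticeDual_le_sup_span_singleton hσO hherm hnd Λ hint hd ?_ ?_)
  · rw [hdd]
    exact zero_mem _
  · intro x hx
    obtain ⟨c, hc⟩ := htype d hd (hu d rfl) x hx
    exact Submodule.mem_sup.mpr ⟨_, hc, c • d,
      Submodule.smul_mem _ c (Submodule.mem_span_singleton_self d), sub_add_cancel x _⟩

theorem mem_span_singleton_sup_smul_latticeDual {ϖ : O} (hϖ : Irreducible ϖ)
    (hσO : ∀ a : O, σ (algebraMap O F a) ∈ (algebraMap O F).range)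
    (hσϖ : σ (algebraMap O F ϖ) = algebraMap O F ϖ)
    (hherm : ∀ x y : V, φ x y = σ (φ y x)) (hdim : finrank F V = 3)
    (Λ : Submodule O V) [Λ.IsLattice F] (hint : Λ ≤ latticeDual φ Λ)
    {u : V} (huΛ : u ∈ Λ) (huiso : φ u u = 0) (hu : u ∉ ϖ • latticeDual φ Λ)
    {a : V} (ha : a ∈ latticeDual φ Λ) (haΛ : a ∉ Λ) (hϖa : ϖ • a ∈ Λ)
    {s : V} (hsΛ : s ∈ Λ) (hsu : ∃ r, φ s u = algebraMap O F (ϖ * r)) :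
    s ∈ Submodule.span O {u} ⊔ ϖ • latticeDual φ Λ := by
  have hι := IsFractionRing.injective O F
  have hϖ0 : algebraMap O F ϖ ≠ 0 := (map_ne_zero_iff _ hι).mpr hϖ.ne_zero
  have := PrincipalIdealRing.isMaximal_of_irreducible hϖ
  obtain ⟨g, hg⟩ := exists_algebraMap_comp_eq ((φ.flip u).restrictScalars O ∘ₗ Λ.subtype)
    fun y => hint y.2 u huΛ
  simp only [LinearMap.comp_apply, Submodule.subtype_apply, LinearMap.restrictScalars_apply,
    LinearMap.flip_apply] at hg
  have hdvd : ∀ y : Λ, ϖ ∣ g y ↔ ∃ r, φ y u = algebraMap O F (ϖ * r) := fun y => by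
    simp only [← hg, hι.eq_iff, Dvd.dvd]
  have := Module.IsTorsionFree.trans_faithfulSMul O F V
  have hg0 : ∃ y, ¬ ϖ ∣ g y := by
    by_contra! H
    exact hu (mem_smul_latticeDual hϖ0 hσO hherm hσϖ fun y hy => (hdvd ⟨y, hy⟩).mp (H _))
  have hp : ∀ w : Λ, ϖ • w ≠ ⟨ϖ • a, hϖa⟩ := fun w hw =>
    haΛ (smul_right_injective V hϖ.ne_zero (congrArg Subtype.val hw) ▸ w.2)
  have hq : ∀ (γ : O) (w : Λ), γ • ⟨ϖ • a, hϖa⟩ + ϖ • w ≠ ⟨u, huΛ⟩ := by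
    intro γ w hw
    refine hu ((Submodule.mem_smul_pointwise_iff_exists _ _ _).mpr
      ⟨γ • a + w, add_mem (Submodule.smul_mem _ γ ha) (hint w.2), ?_⟩)
    have hw' := congrArg Subtype.val hw
    simp only [Submodule.coe_add, Submodule.coe_smul] at hw'
    rw [← hw', smul_add, smul_comm ϖ γ]
  have hgp : ϖ ∣ g ⟨ϖ • a, hϖa⟩ := by
    obtain ⟨r, hr⟩ := ha u huΛ
    exact (hdvd _).mpr ⟨r, by rw [map_mul, hr]; exact apply_smul_left φ ϖ a u⟩
  have hgq : ϖ ∣ g ⟨u, huΛ⟩ := (hdvd _).mpr ⟨0, by simp [huiso]⟩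
  obtain ⟨α, β, w, h⟩ :=
    exists_eq_add_smul_of_dvd ((Submodule.IsLattice.finrank_eq F Λ).trans hdim) g hg0 hp hq hgp hgq
      ((hdvd ⟨s, hsΛ⟩).mpr hsu)
  refine Submodule.mem_span_singleton_sup_smul_iff.mpr
    ⟨β, α • a + w, add_mem (Submodule.smul_mem _ α ha) (hint w.2), ?_⟩
  have h' := congrArg Subtype.val h
  simp only [Submodule.coe_add, Submodule.coe_smul] at h'
  rw [← h', smul_add, smul_comm ϖ α]
  abel

end TypeOne

theorem stmt7_general
    {O F V : Type*} [CommRing O] [IsDomain O] [IsDiscreteValuationRing O]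
    [Field F] [Algebra O F] [IsFractionRing O F]
    (ϖ : O) (hϖ : Irreducible ϖ)
    (σ : F ≃+* F)
    (hσO : ∀ a : O, σ (algebraMap O F a) ∈ (algebraMap O F).range)
    (hσϖ : σ (algebraMap O F ϖ) = algebraMap O F ϖ)
    [AddCommGroup V] [Module F V] [FiniteDimensional F V]
    (hdim : Module.finrank F V = 3)
    [Module O V] [IsScalarTower O F V]
    (φ : V →ₗ[F] V →ₛₗ[(σ : F →+* F)] F)
    (hherm : ∀ x y : V, φ x y = σ (φ y x))
    (hnd : ∀ x : V, (∀ y : V, φ x y = 0) → x = 0)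
    (u : V) (huiso : φ u u = 0)
    (Λ : Submodule O V) (hfg : Λ.FG) (hfull : Submodule.span F (Λ : Set V) = ⊤)
    -- `Λ ⊆ Λ^∨ ⊆ ϖ⁻¹Λ`:
    (hint : ∀ x ∈ Λ, ∀ y ∈ Λ, φ x y ∈ (algebraMap O F).range)
    (hvert : ∀ x : V, (∀ y ∈ Λ, φ x y ∈ (algebraMap O F).range) → ϖ • x ∈ Λ)
    -- type 1 : `dim (Λ^∨ / Λ) = 1`
    (htype1a : ∃ a : V, (∀ y ∈ Λ, φ a y ∈ (algebraMap O F).range) ∧ a ∉ Λ)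
    (htype1b : ∀ a : V, (∀ y ∈ Λ, φ a y ∈ (algebraMap O F).range) → a ∉ Λ →
      ∀ x : V, (∀ y ∈ Λ, φ x y ∈ (algebraMap O F).range) → ∃ c : O, x - c • a ∈ Λ)
    (huΛ : u ∈ Λ)
    -- `u ∉ ϖΛ`:
    (hunotϖΛ : ∀ w : V, ϖ • w = u → w ∉ Λ) :
    ∃ Λ' : Submodule O V, Λ'.FG ∧ Submodule.span F (Λ' : Set V) = ⊤ ∧
      u ∈ Λ' ∧ Λ' ≤ Λ ∧
      (∀ x ∈ Λ', ∀ y ∈ Λ', φ x y ∈ (algebraMap O F).range) ∧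
      -- type 3 : `Λ'^∨ = ϖ⁻¹Λ'`
      (∀ x : V, (∀ y ∈ Λ', φ x y ∈ (algebraMap O F).range) ↔ ϖ • x ∈ Λ') := by
  have : Λ.IsLattice F := ⟨hfg, hfull⟩
  have hϖ0 : algebraMap O F ϖ ≠ 0 :=
    (map_ne_zero_iff _ (IsFractionRing.injective O F)).mpr hϖ.ne_zero
  have hu : u ∉ ϖ • latticeDual φ Λ :=
    notMem_smul_latticeDual hϖ.ne_zero hσO hσϖ hherm hnd Λ hint htype1b huiso hunotϖΛ
  obtain ⟨a, ha, haΛ⟩ := htype1a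
  set Λ' := Submodule.span O {u} ⊔ ϖ • latticeDual φ Λ
  have hu' : u ∈ Λ' := Submodule.mem_sup_left (Submodule.mem_span_singleton_self u)
  have hΛ' : Λ' ≤ Λ := sup_le ((Submodule.span_singleton_le_iff_mem u Λ).mpr huΛ) fun _ hx => by
    obtain ⟨d, hd, rfl⟩ := (Submodule.mem_smul_pointwise_iff_exists _ _ _).mp hx
    exact hvert d hd
  refine ⟨Λ', hfg.of_le hΛ', Submodule.span_eq_top_of_forall_smul_mem hϖ0 hfull fun y hy =>
      Submodule.mem_sup_right (Submodule.smul_mem_pointwise_smul y ϖ _ (hint y hy)),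
    hu', hΛ', fun x hx y hy => hint x (hΛ' hx) y (hΛ' hy), fun x => ⟨fun hx => ?_, ?_⟩⟩
  · have hs : ϖ • x ∈ Λ := latticeDual_latticeDual_le hσO hherm hnd Λ
      (smul_mem_latticeDual hσϖ (latticeDual_anti le_sup_right hx))
    obtain ⟨r, hr⟩ := hx u hu'
    exact mem_span_singleton_sup_smul_latticeDual hϖ hσO hσϖ hherm hdim Λ hint huΛ huiso hu ha
      haΛ (hvert a ha) hs ⟨r, by rw [apply_smul_left, ← hr, map_mul]⟩
  · exact mem_latticeDual_of_smul_mem hϖ0 hσO hherm hσϖ huiso hΛ'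

/-- 'no zero-dimensional connected components' step of §5.6.  With
`F/F₀`, `O`, `ϖ`, `σ` and a nondegenerate 3-dimensional Hermitian space `(𝕍, φ)` as in
Statement 6, let `u ∈ 𝕍` be a nonzero isotropic vector and `Λ` a type-1 vertex lattice
(`Λ ⊆ Λ^∨ ⊆ ϖ⁻¹Λ` with `dim(Λ^∨/Λ) = 1`) with `u ∈ Λ` and `u ∉ ϖΛ`.  Then there exists
a type-3 vertex lattice `Λ'` (`Λ'^∨ = ϖ⁻¹Λ'`) with `u ∈ Λ' ⊆ Λ`. -/
theorem stmt7
    {O F V : Type*} [CommRing O] [IsDomain O] [IsDiscreteValuationRing O]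
    [IsAdicComplete (IsLocalRing.maximalIdeal O) O]
    [Field F] [Algebra O F] [IsFractionRing O F]
    (ϖ : O) (hϖ : Irreducible ϖ)
    (hres : Finite (O ⧸ Ideal.span {ϖ}))
    (σ : F ≃+* F) (hσinv : ∀ x, σ (σ x) = x)
    (hσO : ∀ a : O, σ (algebraMap O F a) ∈ (algebraMap O F).range)
    (hσϖ : σ (algebraMap O F ϖ) = algebraMap O F ϖ)
    [AddCommGroup V] [Module F V] [FiniteDimensional F V]
    (hdim : Module.finrank F V = 3)
    [Module O V] [IsScalarTower O F V]
    (φ : V →ₗ[F] V →ₛₗ[(σ : F →+* F)] F)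
    (hherm : ∀ x y : V, φ x y = σ (φ y x))
    (hnd : ∀ x : V, (∀ y : V, φ x y = 0) → x = 0)
    (u : V) (hu0 : u ≠ 0) (huiso : φ u u = 0)
    (Λ : Submodule O V) (hfg : Λ.FG) (hfull : Submodule.span F (Λ : Set V) = ⊤)
    -- `Λ ⊆ Λ^∨ ⊆ ϖ⁻¹Λ`:
    (hint : ∀ x ∈ Λ, ∀ y ∈ Λ, φ x y ∈ (algebraMap O F).range)
    (hvert : ∀ x : V, (∀ y ∈ Λ, φ x y ∈ (algebraMap O F).range) → ϖ • x ∈ Λ)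
    -- type 1 : `dim (Λ^∨ / Λ) = 1`
    (htype1a : ∃ a : V, (∀ y ∈ Λ, φ a y ∈ (algebraMap O F).range) ∧ a ∉ Λ)
    (htype1b : ∀ a : V, (∀ y ∈ Λ, φ a y ∈ (algebraMap O F).range) → a ∉ Λ →
      ∀ x : V, (∀ y ∈ Λ, φ x y ∈ (algebraMap O F).range) → ∃ c : O, x - c • a ∈ Λ)
    (huΛ : u ∈ Λ)
    -- `u ∉ ϖΛ`:
    (hunotϖΛ : ∀ w : V, ϖ • w = u → w ∉ Λ) :
    ∃ Λ' : Submodule O V, Λ'.FG ∧ Submodule.span F (Λ' : Set V) = ⊤ ∧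
      u ∈ Λ' ∧ Λ' ≤ Λ ∧
      (∀ x ∈ Λ', ∀ y ∈ Λ', φ x y ∈ (algebraMap O F).range) ∧
      -- type 3 : `Λ'^∨ = ϖ⁻¹Λ'`
      (∀ x : V, (∀ y ∈ Λ', φ x y ∈ (algebraMap O F).range) ↔ ϖ • x ∈ Λ') :=
  stmt7_general ϖ hϖ σ hσO hσϖ hdim φ hherm hnd u huiso Λ hfg hfull hint hvert htype1a htype1b huΛ
    hunotϖΛ
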